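/- The minimum wirelength of embedding the hypercube Q_n into the path P_{2^n} on 2^n vertices equals 2^{2n−1} − 2^{n−1}, for n ≥ 2, and this minimum is achieved by the reflected Gray code embedding ξ_n. -/

import Mathlib

open Finset

/-- Number of coordinates in which two 0-1 vectors differ. -/
def diffCount {n : ℕ} (u v : Fin n → Bool) : ℕ :=
  (Finset.univ.filter fun i => u i ≠ v i).card

/-- Adjacency in the hypercube `Q_n`: differ in exactly one coordinate. -/
def cubeAdj {n : ℕ} (u v : Fin n → Bool) : Prop := diffCount u v = 1

instance {n : ℕ} (u v : Fin n → Bool) : Decidable (cubeAdj u v) :=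
  inferInstanceAs (Decidable (diffCount u v = 1))

/-- `theta n S`: number of edges of `Q_n` with exactly one endpoint in `S`. -/
def theta (n : ℕ) (S : Finset (Fin n → Bool)) : ℕ :=
  ((Finset.univ ×ˢ Finset.univ).filter fun p : (Fin n → Bool) × (Fin n → Bool) =>
    p.1 ∈ S ∧ p.2 ∉ S ∧ cubeAdj p.1 p.2).card

/-- The reflected Gray code map `ξ_n : {0,1}^n → {1,...,2^n}`. -/
def gray : (n : ℕ) → (Fin n → Bool) → ℕ
  | 0, _ => 1
  | n + 1, v =>
    if v 0 = false then gray n (fun i => v i.succ)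
    else 2 ^ (n + 1) + 1 - gray n (fun i => v i.succ)

/-- Wirelength of an embedding `f` of `Q_n` into a host with distance `d`. -/
def wirelength {n : ℕ} {α : Type*} (d : α → α → ℕ) (f : (Fin n → Bool) → α) : ℕ :=
  (∑ u : Fin n → Bool, ∑ v : Fin n → Bool, if cubeAdj u v then d (f u) (f v) else 0) / 2

/-- Cyclic distance on the cycle with `m` vertices labeled `1,...,m`. -/
def cycDist (m a b : ℕ) : ℕ := min (Nat.dist a b) (m - Nat.dist a b)

/-- The 2-order Gray code map. -/
def gray2 (n₁ n₂ : ℕ) (v : Fin (n₁ + n₂) → Bool) : ℕ × ℕ :=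
  (gray n₁ fun i => v (Fin.castAdd n₂ i), gray n₂ fun i => v (Fin.natAdd n₁ i))

/-! Cut the path between positions `k` and `k + 1`: the wirelength of `f` is `∑ₖ θ(Aₖ)` with
`Aₖ = f⁻¹{1, …, k}`, since an edge `uv` crosses exactly `|f u - f v|` cuts. By Harper's
edge-isoperimetric inequality a `k`-subset of `Q_n` spans at most `c(k) = ∑_{i<k} s₂(i)` edges
(`s₂` the binary digit sum), so `θ(Aₖ) ≥ n k - 2 c(k)`; and
`2 ∑_{k<2ⁿ} c(k) = (n - 1) ∑_{k<2ⁿ} k`, which sums these bounds to `2ⁿ (2ⁿ - 1) / 2`.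
The reflected Gray code attains it: its recursive definition gives `W(n + 1) = 2 W(n) + 4ⁿ`
for its wirelength `W(n)`. -/

-- Harper's bound on the number of edges spanned by `k` vertices of a hypercube.
def cumBitCount (k : ℕ) : ℕ := ∑ i ∈ range k, (Nat.digits 2 i).sum

theorem digits_two_sum_two_mul (k : ℕ) : (Nat.digits 2 (2 * k)).sum = (Nat.digits 2 k).sum := by
  rcases k.eq_zero_or_pos with rfl | hk
  · rfl
  · rw [Nat.digits_def' one_lt_two (by omega)]
    simp

theorem digits_two_sum_two_mul_add_one (k : ℕ) :
    (Nat.digits 2 (2 * k + 1)).sum = (Nat.digits 2 k).sum + 1 := by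
  rw [Nat.digits_def' one_lt_two (by omega), show (2 * k + 1) / 2 = k by omega,
    show (2 * k + 1) % 2 = 1 by omega, List.sum_cons, add_comm]

theorem sum_range_two_mul {M : Type*} [AddCommMonoid M] (g : ℕ → M) (k : ℕ) :
    ∑ i ∈ range (2 * k), g i = ∑ i ∈ range k, (g (2 * i) + g (2 * i + 1)) := by
  induction k with
  | zero => simp
  | succ k ih =>
    rw [show 2 * (k + 1) = 2 * k + 1 + 1 by ring, sum_range_succ, sum_range_succ, ih,
      sum_range_succ, add_assoc]

theorem cumBitCount_two_mul (k : ℕ) :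
    cumBitCount (2 * k) = 2 * cumBitCount k + k := by
  simp only [cumBitCount, sum_range_two_mul, digits_two_sum_two_mul,
    digits_two_sum_two_mul_add_one, sum_add_distrib, sum_const, card_range, smul_eq_mul]
  ring

theorem cumBitCount_two_mul_add_one (k : ℕ) :
    cumBitCount (2 * k + 1) = 2 * cumBitCount k + k + (Nat.digits 2 k).sum := by
  rw [cumBitCount, sum_range_succ, ← cumBitCount, cumBitCount_two_mul, digits_two_sum_two_mul]

theorem cumBitCount_succ (k : ℕ) :
    cumBitCount (k + 1) = cumBitCount k + (Nat.digits 2 k).sum := sum_range_succ _ _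

theorem two_mul_cumBitCount_two_pow (n : ℕ) : 2 * cumBitCount (2 ^ n) = n * 2 ^ n := by
  induction n with
  | zero => rfl
  | succ n ih => rw [pow_succ', cumBitCount_two_mul]; linear_combination 2 * ih

theorem cumBitCount_add_add_min_le (a b : ℕ) :
    cumBitCount a + cumBitCount b + min a b ≤ cumBitCount (a + b) := by
  induction h : a + b using Nat.strong_induction_on generalizing a b with
  | _ N ih =>
  subst h
  rcases Nat.eq_zero_or_pos (min a b) with h₀ | hpos
  · rcases Nat.min_eq_zero_iff.1 h₀ with rfl | rfl <;> simp [cumBitCount]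
  obtain ⟨x, rfl | rfl⟩ := Nat.even_or_odd' a <;>
    obtain ⟨y, rfl | rfl⟩ := Nat.even_or_odd' b
  · have := ih (x + y) (by omega) x y rfl
    rw [← mul_add, cumBitCount_two_mul, cumBitCount_two_mul, cumBitCount_two_mul]
    omega
  · have h₁ := ih (x + y) (by omega) x y rfl
    have h₂ := ih (x + y + 1) (by omega) x (y + 1) (by omega)
    rw [show 2 * x + (2 * y + 1) = 2 * (x + y) + 1 by ring, cumBitCount_two_mul,
      cumBitCount_two_mul_add_one, cumBitCount_two_mul_add_one]
    rw [cumBitCount_succ y, cumBitCount_succ (x + y)] at h₂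
    omega
  · have h₁ := ih (x + y) (by omega) x y rfl
    have h₂ := ih (x + y + 1) (by omega) (x + 1) y (by omega)
    rw [show 2 * x + 1 + 2 * y = 2 * (x + y) + 1 by ring, cumBitCount_two_mul,
      cumBitCount_two_mul_add_one, cumBitCount_two_mul_add_one]
    rw [cumBitCount_succ x, cumBitCount_succ (x + y)] at h₂
    omega
  · have h₁ := ih (x + y + 1) (by omega) (x + 1) y (by omega)
    have h₂ := ih (x + y + 1) (by omega) x (y + 1) (by omega)
    rw [show 2 * x + 1 + (2 * y + 1) = 2 * (x + y + 1) by ring, cumBitCount_two_mul,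
      cumBitCount_two_mul_add_one, cumBitCount_two_mul_add_one, cumBitCount_succ]
    rw [cumBitCount_succ x, cumBitCount_succ (x + y)] at h₁
    rw [cumBitCount_succ y, cumBitCount_succ (x + y)] at h₂
    omega

theorem sum_range_two_mul_cumBitCount (m : ℕ) :
    ∑ k ∈ range (2 * m), cumBitCount k =
      4 * ∑ k ∈ range m, cumBitCount k + 2 * ∑ k ∈ range m, k + cumBitCount m := by
  rw [sum_range_two_mul]
  simp only [cumBitCount_two_mul, cumBitCount_two_mul_add_one, sum_add_distrib, ← mul_sum]
  rw [cumBitCount]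
  ring

theorem two_mul_sum_cumBitCount_two_pow_add (n : ℕ) :
    2 * ∑ k ∈ range (2 ^ n), cumBitCount k + ∑ k ∈ range (2 ^ n), k =
      n * ∑ k ∈ range (2 ^ n), k := by
  induction n with
  | zero => simp [cumBitCount]
  | succ n ih =>
    have hid : ∑ k ∈ range (2 * 2 ^ n), k = 4 * ∑ k ∈ range (2 ^ n), k + 2 ^ n := by
      rw [sum_range_two_mul]
      simp only [sum_add_distrib, sum_const, card_range, smul_eq_mul, mul_one]
      rw [← mul_sum]
      ring
    rw [pow_succ', sum_range_two_mul_cumBitCount, hid]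
    linear_combination 4 * ih + two_mul_cumBitCount_two_pow n

section EdgeSum

variable {n : ℕ} {M : Type*} [AddCommMonoid M]

theorem sum_fun_fin_succ {α : Type*} [Fintype α] (g : (Fin (n + 1) → α) → M) :
    ∑ v, g v = ∑ a, ∑ x : Fin n → α, g (Fin.cons a x) := by
  rw [← (Fin.consEquiv fun _ => α).sum_comp g, Fintype.sum_prod_type]
  rfl

theorem cubeAdj_comm (u v : Fin n → Bool) : cubeAdj u v ↔ cubeAdj v u := by
  simp only [cubeAdj, diffCount, ne_comm]

theorem diffCount_eq_zero {u v : Fin n → Bool} : diffCount u v = 0 ↔ u = v := by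
  simp [diffCount, filter_eq_empty_iff, funext_iff]

theorem diffCount_cons (a b : Bool) (w x : Fin n → Bool) :
    diffCount (Fin.cons a w : Fin (n + 1) → Bool) (Fin.cons b x) =
      (if a = b then 0 else 1) + diffCount w x := by
  simp only [diffCount, card_filter, Fin.sum_univ_succ, Fin.cons_zero, Fin.cons_succ]
  by_cases h : a = b <;> simp [h]

theorem cubeAdj_cons (a b : Bool) (w x : Fin n → Bool) :
    cubeAdj (Fin.cons a w : Fin (n + 1) → Bool) (Fin.cons b x) ↔
      a = b ∧ cubeAdj w x ∨ a ≠ b ∧ w = x := by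
  rw [cubeAdj, diffCount_cons, cubeAdj, ← diffCount_eq_zero]
  by_cases h : a = b <;> simp [h]

-- Each edge of `Q_n` is counted in both orientations.
def edgeSum (g : (Fin n → Bool) → (Fin n → Bool) → M) : M :=
  ∑ u, ∑ v, if cubeAdj u v then g u v else 0

theorem wirelength_eq_edgeSum {α : Type*} (d : α → α → ℕ) (f : (Fin n → Bool) → α) :
    wirelength d f = edgeSum (fun u v => d (f u) (f v)) / 2 := rfl

theorem edgeSum_comm (g : (Fin n → Bool) → (Fin n → Bool) → M) :
    edgeSum (fun u v => g v u) = edgeSum g := by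
  rw [edgeSum, sum_comm]
  simp only [edgeSum, cubeAdj_comm]

theorem edgeSum_zero (g : (Fin 0 → Bool) → (Fin 0 → Bool) → M) : edgeSum g = 0 := by
  simp [edgeSum, cubeAdj, diffCount]

theorem edgeSum_succ (g : (Fin (n + 1) → Bool) → (Fin (n + 1) → Bool) → M) :
    edgeSum g = ∑ a : Bool, (edgeSum (fun w x => g (Fin.cons a w) (Fin.cons a x)) +
      ∑ w, g (Fin.cons a w) (Fin.cons (!a) w)) := by
  have key : ∀ a (w : Fin n → Bool),
      ∑ v, (if cubeAdj (Fin.cons a w : Fin (n + 1) → Bool) v then g (Fin.cons a w) v else 0) =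
        ∑ x, (if cubeAdj w x then g (Fin.cons a w) (Fin.cons a x) else 0) +
          g (Fin.cons a w) (Fin.cons (!a) w) := by
    intro a w
    rw [sum_fun_fin_succ, Fintype.sum_bool]
    cases a <;> simp [cubeAdj_cons, add_comm]
  simp only [edgeSum, sum_fun_fin_succ (fun u => ∑ v, _), key, sum_add_distrib]

theorem edgeSum_const_right (h : (Fin n → Bool) → M) :
    edgeSum (fun u _ => h u) = n • ∑ u, h u := by
  induction n with
  | zero => simp [edgeSum_zero]
  | succ n ih =>
    simp only [edgeSum_succ, ih, sum_add_distrib, ← sum_fun_fin_succ (fun u => h u)]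
    rw [← smul_sum, ← sum_fun_fin_succ, succ_nsmul]

theorem edgeSum_add (g h : (Fin n → Bool) → (Fin n → Bool) → M) :
    edgeSum (fun u v => g u v + h u v) = edgeSum g + edgeSum h := by
  simp only [edgeSum, ← sum_add_distrib]
  refine sum_congr rfl fun u _ => sum_congr rfl fun v _ => ?_
  split_ifs <;> simp

theorem edgeSum_sum {ι : Type*} (s : Finset ι)
    (g : ι → (Fin n → Bool) → (Fin n → Bool) → M) :
    edgeSum (fun u v => ∑ k ∈ s, g k u v) = ∑ k ∈ s, edgeSum (g k) := by
  induction s using Finset.cons_induction with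
  | empty => simp [edgeSum]
  | cons k s hk ih => simp only [sum_cons, edgeSum_add, ih]

theorem theta_eq_edgeSum (S : Finset (Fin n → Bool)) :
    theta n S = edgeSum (fun u v => if u ∈ S ∧ v ∉ S then 1 else 0) := by
  simp only [theta, card_filter, sum_product, edgeSum]
  refine sum_congr rfl fun u _ => sum_congr rfl fun v _ => ?_
  split_ifs <;> tauto

theorem card_filter_fun_fin_succ (p : (Fin (n + 1) → Bool) → Prop) [DecidablePred p] :
    #{u | p u} = #{w | p (Fin.cons false w)} + #{w | p (Fin.cons true w)} := by
  simp only [card_filter, sum_fun_fin_succ fun u => if p u then 1 else 0, Fintype.sum_bool,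
    add_comm]

theorem edgeSum_inside_le (p : (Fin n → Bool) → Prop) [DecidablePred p] :
    edgeSum (fun u v => if p u ∧ p v then 1 else 0) ≤ 2 * cumBitCount #{u | p u} := by
  induction n with
  | zero => simp [edgeSum_zero]
  | succ n ih =>
    have h₀ := ih fun w => p (Fin.cons false w)
    have h₁ := ih fun w => p (Fin.cons true w)
    rw [edgeSum_succ, Fintype.sum_bool, card_filter_fun_fin_succ]
    set P₀ : Finset (Fin n → Bool) := {w | p (Fin.cons false w)}
    set P₁ : Finset (Fin n → Bool) := {w | p (Fin.cons true w)}
    have hmatch : ∀ a : Bool,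
        ∑ w, (if p (Fin.cons a w) ∧ p (Fin.cons (!a) w) then 1 else 0) ≤ min #P₀ #P₁ := by
      intro a
      rw [← card_filter]
      refine le_min (card_le_card fun w hw => ?_) (card_le_card fun w hw => ?_) <;>
        cases a <;> simp_all [P₀, P₁]
    have := cumBitCount_add_add_min_le #P₀ #P₁
    have := hmatch false
    have := hmatch true
    omega

theorem card_mul_le_theta_add (S : Finset (Fin n → Bool)) :
    n * #S ≤ theta n S + 2 * cumBitCount #S := by
  have hsplit : edgeSum (fun u _ => if u ∈ S then 1 else 0) =
      theta n S + edgeSum (fun u v => if u ∈ S ∧ v ∈ S then 1 else 0) := by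
    rw [theta_eq_edgeSum, ← edgeSum_add]
    congr 1
    funext u v
    by_cases u ∈ S <;> by_cases v ∈ S <;> simp [*]
  have hinside := edgeSum_inside_le (· ∈ S)
  rw [edgeSum_const_right, ← card_filter, filter_univ_mem, smul_eq_mul] at hsplit
  rw [filter_univ_mem] at hinside
  omega

theorem nat_dist_eq_sum_range {a b m : ℕ} (ha : a ≤ m) (hb : b ≤ m) :
    Nat.dist a b =
      ∑ k ∈ range m,
        ((if a ≤ k ∧ ¬b ≤ k then 1 else 0) + if b ≤ k ∧ ¬a ≤ k then 1 else 0) := by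
  have hIco : ∀ a b, b ≤ m → {k ∈ range m | a ≤ k ∧ ¬b ≤ k} = Ico a b := by
    intro a b hb
    ext k
    simp only [mem_filter, mem_range, mem_Ico]
    omega
  rw [sum_add_distrib, ← card_filter, ← card_filter, hIco a b hb, hIco b a ha, Nat.card_Ico,
    Nat.card_Ico, Nat.dist, add_comm]

theorem edgeSum_dist_eq_sum_theta (f : (Fin n → Bool) → ℕ) {m : ℕ} (hf : ∀ u, f u ≤ m) :
    edgeSum (fun u v => Nat.dist (f u) (f v)) = 2 * ∑ k ∈ range m, theta n {u | f u ≤ k} := by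
  have hcut : ∀ k, theta n {u | f u ≤ k} =
      edgeSum fun u v => if f u ≤ k ∧ ¬f v ≤ k then 1 else 0 := by
    intro k
    simp only [theta_eq_edgeSum, mem_filter, mem_univ, true_and]
  have hcut' : ∀ k, theta n {u | f u ≤ k} =
      edgeSum fun u v => if f v ≤ k ∧ ¬f u ≤ k then 1 else 0 := by
    intro k
    rw [hcut, ← edgeSum_comm]
  simp only [nat_dist_eq_sum_range (hf _) (hf _), edgeSum_sum, edgeSum_add, ← hcut, ← hcut',
    ← two_mul, mul_sum]

theorem sum_comp_of_bijOn {α : Type*} [Fintype α] {f : α → ℕ} {m : ℕ}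
    (hf : Set.BijOn f Set.univ (Set.Icc 1 m)) (h : ℕ → M) :
    ∑ u, h (f u) = ∑ j ∈ Icc 1 m, h j :=
  sum_nbij f (fun u _ => by simpa using hf.mapsTo (Set.mem_univ u)) (by simpa using hf.injOn)
    (by simpa using hf.surjOn) fun _ _ => rfl

theorem card_filter_le_of_bijOn {α : Type*} [Fintype α] {f : α → ℕ} {m : ℕ}
    (hf : Set.BijOn f Set.univ (Set.Icc 1 m)) {k : ℕ} (hk : k ≤ m) : #{u | f u ≤ k} = k := by
  have hIcc : {j ∈ Icc 1 m | j ≤ k} = Icc 1 k := by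
    ext j
    simp only [mem_filter, mem_Icc]
    omega
  rw [card_filter, sum_comp_of_bijOn hf fun j => if j ≤ k then 1 else 0, ← card_filter, hIcc,
    Nat.card_Icc, Nat.add_sub_cancel]

theorem le_edgeSum_dist {f : (Fin n → Bool) → ℕ}
    (hf : Set.BijOn f Set.univ (Set.Icc 1 (2 ^ n))) :
    2 ^ n * (2 ^ n - 1) ≤ edgeSum (fun u v => Nat.dist (f u) (f v)) := by
  have hθ : ∀ k ∈ range (2 ^ n), n * k ≤ theta n {u | f u ≤ k} + 2 * cumBitCount k := by
    intro k hk
    simpa [card_filter_le_of_bijOn hf (mem_range.1 hk).le] using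
      card_mul_le_theta_add (n := n) {u | f u ≤ k}
  have hsum := sum_le_sum hθ
  rw [sum_add_distrib, ← mul_sum, ← mul_sum] at hsum
  rw [edgeSum_dist_eq_sum_theta f fun u => (hf.mapsTo (Set.mem_univ u)).2,
    ← sum_range_id_mul_two]
  linarith [two_mul_sum_cumBitCount_two_pow_add n]

end EdgeSum

theorem gray_cons {n : ℕ} (a : Bool) (w : Fin n → Bool) :
    gray (n + 1) (Fin.cons a w) =
      if a = false then gray n w else 2 ^ (n + 1) + 1 - gray n w := by
  simp only [gray, Fin.cons_zero, Fin.cons_succ]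

theorem gray_mem_Icc (n : ℕ) (v : Fin n → Bool) : gray n v ∈ Set.Icc 1 (2 ^ n) := by
  induction n with
  | zero => simp [gray]
  | succ n ih =>
    cases v using Fin.consCases with
    | cons a w =>
      have := ih w
      simp only [Set.mem_Icc, pow_succ] at this ⊢
      cases a <;> simp [gray_cons] <;> omega

theorem gray_injective (n : ℕ) : Function.Injective (gray n) := by
  induction n with
  | zero => exact fun u v _ => Subsingleton.elim u v
  | succ n ih =>
    intro u v huv
    cases u using Fin.consCases with
    | cons a w =>
    cases v using Fin.consCases with
    | cons b x =>
    have hw := gray_mem_Icc n w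
    have hx := gray_mem_Icc n x
    simp only [Set.mem_Icc] at hw hx
    have hwx : gray n w = gray n x ∧ a = b := by
      cases a <;> cases b <;> simp [gray_cons, pow_succ] at huv ⊢ <;> omega
    rw [ih hwx.1, hwx.2]

theorem gray_bijOn (n : ℕ) : Set.BijOn (gray n) Set.univ (Set.Icc 1 (2 ^ n)) := by
  have himage : univ.image (gray n) = Icc 1 (2 ^ n) := by
    refine eq_of_subset_of_card_le (fun j hj => ?_) ?_
    · obtain ⟨v, -, rfl⟩ := mem_image.1 hj
      exact mem_Icc.2 (gray_mem_Icc n v)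
    · simp [card_image_of_injective _ (gray_injective n)]
  refine ⟨fun v _ => gray_mem_Icc n v, (gray_injective n).injOn, fun j hj => ?_⟩
  obtain ⟨v, -, hv⟩ := mem_image.1 (himage ▸ mem_Icc.2 hj)
  exact ⟨v, trivial, hv⟩

theorem sum_Icc_dist_reflect (m : ℕ) : ∑ j ∈ Icc 1 m, Nat.dist j (2 * m + 1 - j) = m * m := by
  induction m with
  | zero => rfl
  | succ m ih =>
    have hshift : ∀ j ∈ Icc 1 m,
        Nat.dist j (2 * (m + 1) + 1 - j) = Nat.dist j (2 * m + 1 - j) + 2 := by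
      intro j hj
      simp only [mem_Icc, Nat.dist] at hj ⊢
      omega
    rw [sum_Icc_succ_top (by omega), sum_congr rfl hshift, sum_add_distrib, ih]
    simp only [sum_const, Nat.card_Icc, Nat.dist]
    ring_nf
    omega

theorem edgeSum_dist_gray (n : ℕ) :
    edgeSum (fun u v => Nat.dist (gray n u) (gray n v)) + 2 ^ n = 2 ^ n * 2 ^ n := by
  induction n with
  | zero => simp [edgeSum_zero]
  | succ n ih =>
    have hreflect : (edgeSum fun w x => Nat.dist (2 ^ (n + 1) + 1 - gray n w)
        (2 ^ (n + 1) + 1 - gray n x)) = edgeSum fun w x => Nat.dist (gray n w) (gray n x) := by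
      congr 1
      funext w x
      have hw := gray_mem_Icc n w
      have hx := gray_mem_Icc n x
      simp only [Set.mem_Icc, Nat.dist] at hw hx ⊢
      omega
    have hmatch : ∑ w, Nat.dist (gray n w) (2 ^ (n + 1) + 1 - gray n w) = 2 ^ n * 2 ^ n := by
      rw [sum_comp_of_bijOn (gray_bijOn n) fun j => Nat.dist j (2 ^ (n + 1) + 1 - j), pow_succ',
        sum_Icc_dist_reflect]
    rw [edgeSum_succ, Fintype.sum_bool]
    simp only [gray_cons, Bool.not_true, Bool.not_false, if_true, Bool.true_eq_false, if_false]
    rw [hreflect, hmatch, sum_congr rfl fun w _ => Nat.dist_comm _ _, hmatch, pow_succ]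
    linarith

theorem two_pow_two_mul_sub_one_sub_two_pow_sub_one (n : ℕ) :
    2 ^ (2 * n - 1) - 2 ^ (n - 1) = 2 ^ n * (2 ^ n - 1) / 2 := by
  cases n with
  | zero => rfl
  | succ n =>
    rw [show 2 * (n + 1) - 1 = n + (n + 1) by omega, Nat.add_sub_cancel, pow_add, pow_succ 2 n,
      mul_right_comm, Nat.mul_div_cancel _ two_pos, Nat.mul_sub, mul_one, ← pow_succ]

theorem stmt7_general (n : ℕ) :
    (∀ f : (Fin n → Bool) → ℕ, Set.BijOn f Set.univ (Set.Icc 1 (2 ^ n)) →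
      2 ^ (2 * n - 1) - 2 ^ (n - 1) ≤ wirelength Nat.dist f) ∧
    Set.BijOn (gray n) Set.univ (Set.Icc 1 (2 ^ n)) ∧
    wirelength Nat.dist (gray n) = 2 ^ (2 * n - 1) - 2 ^ (n - 1) := by
  rw [two_pow_two_mul_sub_one_sub_two_pow_sub_one]
  refine ⟨fun f hf => ?_, gray_bijOn n, ?_⟩
  · exact wirelength_eq_edgeSum Nat.dist f ▸ Nat.div_le_div_right (le_edgeSum_dist hf)
  · rw [wirelength_eq_edgeSum, Nat.mul_sub, mul_one, ← edgeSum_dist_gray n, Nat.add_sub_cancel]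

/-- Minimum wirelength of the hypercube into the path `P_{2^n}`, achieved by Gray code. -/
theorem stmt7 (n : ℕ) (hn : 2 ≤ n) :
    (∀ f : (Fin n → Bool) → ℕ, Set.BijOn f Set.univ (Set.Icc 1 (2 ^ n)) →
      2 ^ (2 * n - 1) - 2 ^ (n - 1) ≤ wirelength Nat.dist f) ∧
    Set.BijOn (gray n) Set.univ (Set.Icc 1 (2 ^ n)) ∧
    wirelength Nat.dist (gray n) = 2 ^ (2 * n - 1) - 2 ^ (n - 1) :=
  stmt7_general n
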